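/- Let X be a Polish space, ϱ a Radon measure on X, q ∈ (0,1) and f, g ∈ U. Then the splitting law of the Poisson point process evaluated on the exponential test function h = e^{−ζ_f} ⊗ e^{−ζ_g} equals a single Laplace transform of Π_ϱ: S_q(Π_ϱ)(e^{−ζ_f} ⊗ e^{−ζ_g}) = L_{Π_ϱ}(v), where v = g − log(1 − q + q e^{g−f}) = −log((1−q) e^{−g} + q e^{−f}) ∈ U. -/

import Mathlib

/-!
On a bounded set `A` of finite intensity the Poisson configuration `μ` is almost surely a finite
sum of Dirac masses `δ_{x_i}`, and for `ν ≤ μ` we have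
`e^{-ν(f)} e^{-(μ-ν)(g)} = e^{-μ(g)} e^{-ν(f-g)}`. Since `f - g` may be negative, the Laplace
transform of the thinning is evaluated instead at `f - g + s` on `A` for every large `s`, giving
`E[z^{ν(A)} e^{-ν(f-g)}] = ∏ᵢ (1 - q + q z e^{(g-f)(xᵢ)})` for all small `z = e^{-s} > 0`.
As `ν(A) ≤ μ(A)` is bounded, both sides are polynomials in `z`, so the identity persists at
`z = 1`, where the right side becomes `e^{μ(g)} ∏ᵢ ((1-q) e^{-g} + q e^{-f})(xᵢ) = e^{μ(g)-μ(v)}`.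
General `f, g ∈ U` follow by exhausting their bounded supports with sets of finite
`ϱ`-measure (bounded sets need not have finite `ϱ`-measure) and dominated convergence.
-/

open MeasureTheory ENNReal

noncomputable section

namespace PoissonSplitting

variable {X : Type*} [MeasurableSpace X] [MetricSpace X]

/-- `expNeg a = e^{-a}` for an extended nonnegative real `a`. -/
def expNeg (a : ℝ≥0∞) : ℝ≥0∞ := if a = ∞ then 0 else ENNReal.ofReal (Real.exp (-a.toReal))

/-- A (Radon) point measure on `X`: a locally finite countable sum of Dirac measures. -/
def IsPointMeasure (μ : Measure X) : Prop :=
  (∃ D : ℕ → Option X, μ = Measure.sum fun n => (D n).elim 0 Measure.dirac) ∧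
    IsLocallyFiniteMeasure μ

/-- The class `U` of nonnegative bounded measurable functions on `X` whose support is
contained in some bounded set. -/
def MemU (f : X → ℝ) : Prop :=
  Measurable f ∧ (∀ x, 0 ≤ f x) ∧ (∃ C, ∀ x, f x ≤ C) ∧
    Bornology.IsBounded (Function.support f)

/-- The pairing `ζ_f(ν) = ν(f)`, as an extended nonnegative real. -/
def pairing (f : X → ℝ) (ν : Measure X) : ℝ≥0∞ := ∫⁻ x, ENNReal.ofReal (f x) ∂ν

/-- The Laplace transform of a law `P` on measures: `L_P(f) = ∫ e^{-ν(f)} P(dν)`. -/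
def laplaceT (P : Measure (Measure X)) (f : X → ℝ) : ℝ≥0∞ := ∫⁻ ν, expNeg (pairing f ν) ∂P

/-- `T` is the independent `q`-thinning `T^μ_q` of the point measure `μ`:
the probability law, supported on point-measure subconfigurations of `μ`, whose Laplace
transform on test functions `f ∈ U` is
`T(e^{-ζ_f}) = ∏_{x∈μ}(1-q+q e^{-f(x)})^{μ({x})} = exp(∫ log(1-q+q e^{-f}) dμ)`. -/
def IsThinning (q : ℝ) (μ : Measure X) (T : Measure (Measure X)) : Prop :=
  IsProbabilityMeasure T ∧ (∀ᵐ ν ∂T, IsPointMeasure ν ∧ ν ≤ μ) ∧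
    ∀ f : X → ℝ, MemU f →
      laplaceT T f =
        expNeg (∫⁻ x, ENNReal.ofReal (-Real.log (1 - q + q * Real.exp (-f x))) ∂μ)

/-- `P` is the Poisson point process `Π_ϱ` with intensity (first moment) measure `ϱ`:
the point process with Laplace transform `L_P(f) = exp(-ϱ(1 - e^{-f}))`, `f ∈ U`. -/
def IsPoissonPP (ϱ : Measure X) (P : Measure (Measure X)) : Prop :=
  IsProbabilityMeasure P ∧ (∀ᵐ μ ∂P, IsPointMeasure μ) ∧
    ∀ f : X → ℝ, MemU f →
      laplaceT P f = expNeg (∫⁻ x, ENNReal.ofReal (1 - Real.exp (-f x)) ∂ϱ)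

/-- A point process: a probability law on the point measures of `X`. -/
def IsPointProcess (P : Measure (Measure X)) : Prop :=
  IsProbabilityMeasure P ∧ ∀ᵐ μ ∂P, IsPointMeasure μ

/-- The first moment (intensity) measure `ν_P` of a point process `P`:
`ν_P(B) = ∫ μ(B) P(dμ)`. -/
def momentMeasure (P : Measure (Measure X)) : Measure X := P.bind id

/-- `P` is of first order if its first moment measure is a Radon (locally finite) measure. -/
def IsFirstOrder (P : Measure (Measure X)) : Prop := IsLocallyFiniteMeasure (momentMeasure P)

end PoissonSplitting

open MeasureTheory ENNReal PoissonSplitting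

open Filter Topology Set Function

namespace PoissonSplitting

lemma expNeg_eq_exp (a : ℝ≥0∞) : expNeg a = EReal.exp (-(a : EReal)) := by
  rcases eq_or_ne a ∞ with rfl | ha
  · simp [expNeg]
  · rw [expNeg, if_neg ha, ← ENNReal.ofReal_toReal ha, EReal.coe_ennreal_ofReal,
      max_eq_left ENNReal.toReal_nonneg, ← EReal.coe_neg, EReal.exp_coe,
      ENNReal.toReal_ofReal ENNReal.toReal_nonneg]

lemma continuous_expNeg : Continuous expNeg := by
  simp_rw [funext expNeg_eq_exp]
  exact ENNReal.continuous_exp.comp (continuous_neg.comp continuous_coe_ennreal_ereal)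

lemma measurable_expNeg : Measurable expNeg := continuous_expNeg.measurable

@[simp] lemma expNeg_zero : expNeg 0 = 1 := by simp [expNeg]

lemma expNeg_ofReal {r : ℝ} (hr : 0 ≤ r) :
    expNeg (ENNReal.ofReal r) = ENNReal.ofReal (Real.exp (-r)) := by
  simp [expNeg, ENNReal.toReal_ofReal hr]

lemma expNeg_le_one (a : ℝ≥0∞) : expNeg a ≤ 1 := by
  simp [expNeg_eq_exp, EReal.coe_ennreal_nonneg]

lemma expNeg_ne_top (a : ℝ≥0∞) : expNeg a ≠ ∞ :=
  ne_top_of_le_ne_top one_ne_top (expNeg_le_one a)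

lemma expNeg_antitone : Antitone expNeg := fun a b hab => by
  simp only [expNeg_eq_exp]
  exact EReal.exp_monotone (EReal.neg_le_neg_iff.2 (EReal.coe_ennreal_le_coe_ennreal_iff.2 hab))

lemma expNeg_add (a b : ℝ≥0∞) : expNeg (a + b) = expNeg a * expNeg b := by
  simp only [expNeg_eq_exp, EReal.coe_ennreal_add, ← EReal.exp_add]
  rw [EReal.neg_add (.inl (EReal.coe_ennreal_ne_bot _)) (.inr (EReal.coe_ennreal_ne_bot _)),
    sub_eq_add_neg]

lemma expNeg_sum {ι : Type*} (s : Finset ι) (a : ι → ℝ≥0∞) :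
    expNeg (∑ i ∈ s, a i) = ∏ i ∈ s, expNeg (a i) := by
  classical
  induction s using Finset.induction_on with
  | empty => simp
  | insert i s hi ih => rw [Finset.sum_insert hi, Finset.prod_insert hi, expNeg_add, ih]

lemma expNeg_mul_natCast {r : ℝ} (hr : 0 ≤ r) (n : ℕ) :
    expNeg (ENNReal.ofReal r * n) = ENNReal.ofReal (Real.exp (-r) ^ n) := by
  rw [← ENNReal.ofReal_natCast, ← ENNReal.ofReal_mul hr, expNeg_ofReal (by positivity),
    ← Real.exp_nat_mul]
  ring_nf

-- `z ↦ ∫ z^N Ψ` is a polynomial of degree at most `K`, so it coincides with `r`.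
open Polynomial in
lemma lintegral_toReal_eq_eval_one {Ω : Type*} [MeasurableSpace Ω] {P : Measure Ω}
    {N : Ω → ℕ} (hN : Measurable N) {K : ℕ} (hNK : ∀ᵐ ω ∂P, N ω ≤ K)
    {Ψ : Ω → ℝ≥0∞} (hΨ : Measurable Ψ) (hΨfin : ∫⁻ ω, Ψ ω ∂P ≠ ∞) {r : ℝ[X]} {z₀ : ℝ}
    (hz₀ : 0 < z₀)
    (h : ∀ z ∈ Set.Ioc 0 z₀, (∫⁻ ω, ENNReal.ofReal (z ^ N ω) * Ψ ω ∂P).toReal = r.eval z) :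
    (∫⁻ ω, Ψ ω ∂P).toReal = r.eval 1 := by
  set c : ℕ → ℝ≥0∞ := fun k => ∫⁻ ω in N ⁻¹' {k}, Ψ ω ∂P
  have hc : ∀ k, c k ≠ ∞ := fun k => ne_top_of_le_ne_top hΨfin (setLIntegral_le_lintegral _ _)
  have hsplit : ∀ z : ℝ, 0 ≤ z →
      (∫⁻ ω, ENNReal.ofReal (z ^ N ω) * Ψ ω ∂P).toReal
        = (∑ k ∈ Finset.range (K + 1), C (c k).toReal * X ^ k).eval z := by
    intro z hz
    have hae : (fun ω => ENNReal.ofReal (z ^ N ω) * Ψ ω) =ᵐ[P] fun ω =>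
        ∑ k ∈ Finset.range (K + 1), (N ⁻¹' {k}).indicator
          (fun ω => ENNReal.ofReal (z ^ k) * Ψ ω) ω := by
      filter_upwards [hNK] with ω hω
      rw [Finset.sum_eq_single_of_mem (N ω) (Finset.mem_range.2 (Nat.lt_succ_of_le hω))]
      · simp
      · intro k _ hk
        exact Set.indicator_of_notMem (s := N ⁻¹' {k}) (fun h : N ω = k => hk h.symm) _
    rw [lintegral_congr_ae hae, lintegral_finsetSum _ fun k _ =>
      (hΨ.const_mul _).indicator (hN (measurableSet_singleton k))]
    simp_rw [lintegral_indicator (hN (measurableSet_singleton _)),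
      lintegral_const_mul _ hΨ]
    rw [ENNReal.toReal_sum fun k _ => ENNReal.mul_ne_top ENNReal.ofReal_ne_top (hc k),
      eval_finsetSum]
    refine Finset.sum_congr rfl fun k _ => ?_
    rw [ENNReal.toReal_mul, ENNReal.toReal_ofReal (pow_nonneg hz k), eval_mul, eval_C, eval_pow,
      eval_X, mul_comm]
  have hpoly : ∑ k ∈ Finset.range (K + 1), C (c k).toReal * X ^ k = r := by
    refine eq_of_infinite_eval_eq _ _ ((Set.Ioc_infinite hz₀).mono fun z hz => ?_)
    rw [Set.mem_ofPred_eq, ← hsplit z hz.1.le, h z hz]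
  simpa [hpoly] using hsplit 1 zero_le_one

section Pairing

variable {X : Type*} [MeasurableSpace X]

lemma measurable_pairing {φ : X → ℝ} (hφ : Measurable φ) :
    Measurable (pairing φ : Measure X → ℝ≥0∞) :=
  Measure.measurable_lintegral hφ.ennreal_ofReal

lemma measurable_expNeg_pairing_mul {f g : X → ℝ} (hf : Measurable f) (hg : Measurable g) :
    Measurable fun p : Measure X × Measure X => expNeg (pairing f p.1) * expNeg (pairing g p.2) :=
  (measurable_expNeg.comp ((measurable_pairing hf).comp measurable_fst)).mul
    (measurable_expNeg.comp ((measurable_pairing hg).comp measurable_snd))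

lemma pairing_restrict {φ : X → ℝ} {A : Set X} (hφA : support φ ⊆ A) (m : Measure X) :
    pairing φ (m.restrict A) = pairing φ m :=
  setLIntegral_eq_of_support_subset ((support_comp_subset ENNReal.ofReal_zero φ).trans hφA)

lemma pairing_indicator {φ : X → ℝ} {A : Set X} (hA : MeasurableSet A) (m : Measure X) :
    pairing (A.indicator φ) m = ∫⁻ x in A, ENNReal.ofReal (φ x) ∂m := by
  rw [pairing, ← lintegral_indicator hA]
  exact lintegral_congr fun x => congrFun (indicator_comp_of_zero ENNReal.ofReal_zero).symm x

lemma pairing_mono {φ : X → ℝ} {ν μ : Measure X} (h : ν ≤ μ) : pairing φ ν ≤ pairing φ μ :=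
  lintegral_mono' h le_rfl

lemma pairing_sub_of_le {φ : X → ℝ} {A : Set X} (hA : MeasurableSet A) (hφA : support φ ⊆ A)
    {ν μ : Measure X} (hνμ : ν ≤ μ) (hνA : ν A ≠ ∞) (hφν : pairing φ ν ≠ ∞) :
    pairing φ (μ - ν) = pairing φ μ - pairing φ ν := by
  have : IsFiniteMeasure (ν.restrict A) := ⟨by simpa using hνA.lt_top⟩
  have hadd : pairing φ (μ - ν) + pairing φ ν = pairing φ μ := by
    rw [← pairing_restrict hφA (μ - ν), ← pairing_restrict hφA ν, ← pairing_restrict hφA μ,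
      Measure.restrict_sub_eq_restrict_sub_restrict hA, pairing, pairing,
      ← lintegral_add_measure, Measure.sub_add_cancel_of_le (Measure.restrict_mono subset_rfl hνμ)]
    rfl
  rw [← hadd, ENNReal.add_sub_cancel_right hφν]

lemma measure_eq_card_of_restrict_eq_sum_dirac {μ : Measure X} {A : Set X} {ι : Type*}
    [Fintype ι] {x : ι → X} (hμA : μ.restrict A = ∑ i, Measure.dirac (x i)) :
    μ A = Fintype.card ι := by
  rw [← Measure.restrict_apply_univ, hμA]
  simp

lemma pairing_eq_sum_of_restrict_eq_sum_dirac {φ : X → ℝ} (hφ : Measurable φ) {A : Set X}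
    (hφA : support φ ⊆ A) {μ : Measure X} {ι : Type*} [Fintype ι] {x : ι → X}
    (hμA : μ.restrict A = ∑ i, Measure.dirac (x i)) :
    pairing φ μ = ∑ i, ENNReal.ofReal (φ (x i)) := by
  rw [← pairing_restrict hφA, hμA, pairing, lintegral_finsetSum_measure]
  simp [lintegral_dirac' _ hφ.ennreal_ofReal]

lemma expNeg_pairing_eq_prod_of_restrict_eq_sum_dirac {φ : X → ℝ} (hφ : Measurable φ)
    (hφ0 : 0 ≤ φ) {A : Set X} (hφA : support φ ⊆ A) {μ : Measure X} {ι : Type*} [Fintype ι]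
    {x : ι → X} (hμA : μ.restrict A = ∑ i, Measure.dirac (x i)) :
    expNeg (pairing φ μ) = ∏ i, ENNReal.ofReal (Real.exp (-φ (x i))) := by
  rw [pairing_eq_sum_of_restrict_eq_sum_dirac hφ hφA hμA, expNeg_sum]
  exact Finset.prod_congr rfl fun i _ => expNeg_ofReal (hφ0 _)

lemma tendsto_expNeg_pairing_indicator {φ : X → ℝ} {A : ℕ → Set X}
    (hAm : ∀ n, MeasurableSet (A n)) (hA : Monotone A) (hφA : support φ ⊆ ⋃ n, A n)
    (m : Measure X) :
    Tendsto (fun n => expNeg (pairing ((A n).indicator φ) m)) atTop (𝓝 (expNeg (pairing φ m))) := by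
  refine (continuous_expNeg.tendsto _).comp ?_
  simp_rw [pairing_indicator (hAm _), ← withDensity_apply _ (hAm _)]
  rw [← pairing_restrict hφA, pairing, ← withDensity_apply _ (MeasurableSet.iUnion hAm)]
  exact tendsto_measure_iUnion_atTop hA

lemma tendsto_laplaceT_indicator {P : Measure (Measure X)} [IsFiniteMeasure P] {φ : X → ℝ}
    (hφ : Measurable φ) {A : ℕ → Set X} (hAm : ∀ n, MeasurableSet (A n)) (hA : Monotone A)
    (hφA : support φ ⊆ ⋃ n, A n) :
    Tendsto (fun n => laplaceT P ((A n).indicator φ)) atTop (𝓝 (laplaceT P φ)) :=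
  tendsto_lintegral_of_dominated_convergence 1
    (fun n => measurable_expNeg.comp (measurable_pairing (hφ.indicator (hAm n))))
    (fun _ => ae_of_all _ fun _ => expNeg_le_one _) (by simp)
    (ae_of_all _ (tendsto_expNeg_pairing_indicator hAm hA hφA))

lemma tendsto_lintegral_expNeg_pairing_mul_indicator {S : Measure (Measure X × Measure X)}
    [IsFiniteMeasure S] {f g : X → ℝ} (hf : Measurable f) (hg : Measurable g) {A : ℕ → Set X}
    (hAm : ∀ n, MeasurableSet (A n)) (hA : Monotone A) (hfA : support f ⊆ ⋃ n, A n)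
    (hgA : support g ⊆ ⋃ n, A n) :
    Tendsto (fun n => ∫⁻ p, expNeg (pairing ((A n).indicator f) p.1)
        * expNeg (pairing ((A n).indicator g) p.2) ∂S) atTop
      (𝓝 (∫⁻ p, expNeg (pairing f p.1) * expNeg (pairing g p.2) ∂S)) :=
  tendsto_lintegral_of_dominated_convergence 1
    (fun n => measurable_expNeg_pairing_mul (hf.indicator (hAm n)) (hg.indicator (hAm n)))
    (fun _ => ae_of_all _ fun _ => mul_le_one' (expNeg_le_one _) (expNeg_le_one _)) (by simp)
    (ae_of_all _ fun p => ENNReal.Tendsto.mul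
      (tendsto_expNeg_pairing_indicator hAm hA hfA p.1) (.inr (expNeg_ne_top _))
      (tendsto_expNeg_pairing_indicator hAm hA hgA p.2) (.inr (expNeg_ne_top _)))

lemma isProbabilityMeasure_of_lintegral_eq_lintegral_lintegral_sub {P : Measure (Measure X)}
    [IsProbabilityMeasure P] {T : Measure X → Measure (Measure X)}
    (hT : ∀ᵐ μ ∂P, IsProbabilityMeasure (T μ)) {S : Measure (Measure X × Measure X)}
    (hS : ∀ h : Measure X × Measure X → ℝ≥0∞, Measurable h →
      ∫⁻ p, h p ∂S = ∫⁻ μ, ∫⁻ ν, h (ν, μ - ν) ∂(T μ) ∂P) :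
    IsProbabilityMeasure S := by
  constructor
  calc S univ = ∫⁻ _, 1 ∂S := lintegral_one.symm
    _ = ∫⁻ μ, ∫⁻ _, 1 ∂(T μ) ∂P := hS _ measurable_const
    _ = ∫⁻ _, 1 ∂P := lintegral_congr_ae (hT.mono fun μ hμ => by simp)
    _ = 1 := by simp

end Pairing

section SplitFn

variable {X : Type*}

-- The paper's `v`: `e^{-v} = (1 - q) e^{-g} + q e^{-f}`.
def splitFn (q : ℝ) (f g : X → ℝ) (x : X) : ℝ :=
  -Real.log ((1 - q) * Real.exp (-g x) + q * Real.exp (-f x))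

variable {q : ℝ} {f g : X → ℝ}

lemma one_sub_mul_exp_add_mul_exp_pos (hq : q ∈ Set.Icc (0 : ℝ) 1) (a b : ℝ) :
    0 < (1 - q) * Real.exp (-b) + q * Real.exp (-a) := by
  have ha := Real.exp_pos (-a)
  have hb := Real.exp_pos (-b)
  rcases hq.2.lt_or_eq with hq1 | rfl
  · nlinarith [mul_nonneg hq.1 ha.le, mul_pos (sub_pos.2 hq1) hb]
  · simpa using ha

lemma exp_neg_splitFn (hq : q ∈ Set.Icc (0 : ℝ) 1) (x : X) :
    Real.exp (-splitFn q f g x) = (1 - q) * Real.exp (-g x) + q * Real.exp (-f x) := by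
  rw [splitFn, neg_neg, Real.exp_log (one_sub_mul_exp_add_mul_exp_pos hq _ _)]

lemma splitFn_nonneg (hq : q ∈ Set.Icc (0 : ℝ) 1) (hf : 0 ≤ f) (hg : 0 ≤ g) :
    0 ≤ splitFn q f g := fun x => by
  have hfx := Real.exp_le_one_iff.2 (neg_nonpos.2 (hf x))
  have hgx := Real.exp_le_one_iff.2 (neg_nonpos.2 (hg x))
  refine neg_nonneg.2 (Real.log_nonpos (one_sub_mul_exp_add_mul_exp_pos hq _ _).le ?_)
  nlinarith [hq.1, hq.2]

lemma splitFn_le (hq : q ∈ Set.Icc (0 : ℝ) 1) {C : ℝ} {x : X} (hfx : f x ≤ C) (hgx : g x ≤ C) :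
    splitFn q f g x ≤ C := by
  have h1 : Real.exp (-C) ≤ Real.exp (-f x) := Real.exp_le_exp.2 (by linarith)
  have h2 : Real.exp (-C) ≤ Real.exp (-g x) := Real.exp_le_exp.2 (by linarith)
  have h : Real.exp (-C) ≤ (1 - q) * Real.exp (-g x) + q * Real.exp (-f x) := by
    nlinarith [hq.1, hq.2]
  have := Real.log_le_log (Real.exp_pos _) h
  rw [Real.log_exp] at this
  rw [splitFn]
  linarith

lemma splitFn_eq_sub_log (hq : q ∈ Set.Icc (0 : ℝ) 1) (x : X) :
    splitFn q f g x = g x - Real.log (1 - q + q * Real.exp (g x - f x)) := by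
  have hfactor : (1 - q) * Real.exp (-g x) + q * Real.exp (-f x)
      = Real.exp (-g x) * (1 - q + q * Real.exp (g x - f x)) := by
    rw [Real.exp_sub, Real.exp_neg (g x), Real.exp_neg (f x)]
    field_simp
  have hpos : 0 < 1 - q + q * Real.exp (g x - f x) := by
    have := one_sub_mul_exp_add_mul_exp_pos hq (f x) (g x)
    rw [hfactor] at this
    exact pos_of_mul_pos_right this (Real.exp_pos _).le
  rw [splitFn, hfactor, Real.log_mul (Real.exp_ne_zero _) hpos.ne', Real.log_exp]
  ring

lemma splitFn_zero_right (w : X → ℝ) (x : X) :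
    splitFn q w 0 x = -Real.log (1 - q + q * Real.exp (-w x)) := by
  simp [splitFn]

lemma splitFn_apply_of_eq_zero {x : X} (hfx : f x = 0) (hgx : g x = 0) : splitFn q f g x = 0 := by
  simp [splitFn, hfx, hgx]

lemma support_splitFn_subset : support (splitFn q f g) ⊆ support f ∪ support g := by
  intro x hx
  by_contra h
  simp only [Set.mem_union, mem_support, not_or, not_not] at h
  exact hx (splitFn_apply_of_eq_zero h.1 h.2)

lemma splitFn_indicator (A : Set X) :
    splitFn q (A.indicator f) (A.indicator g) = A.indicator (splitFn q f g) := by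
  ext x
  by_cases hx : x ∈ A
  · simp [hx, splitFn]
  · simp [hx, splitFn_apply_of_eq_zero]

lemma measurable_splitFn [MeasurableSpace X] (hf : Measurable f) (hg : Measurable g) :
    Measurable (splitFn q f g) := by
  unfold splitFn
  fun_prop

lemma memU_splitFn [MeasurableSpace X] [MetricSpace X] (hq : q ∈ Set.Icc (0 : ℝ) 1)
    (hf : MemU f) (hg : MemU g) : MemU (splitFn q f g) := by
  obtain ⟨hfm, hf0, ⟨Cf, hCf⟩, hfb⟩ := hf
  obtain ⟨hgm, hg0, ⟨Cg, hCg⟩, hgb⟩ := hg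
  exact ⟨measurable_splitFn hfm hgm, splitFn_nonneg hq hf0 hg0,
    ⟨max Cf Cg, fun x => splitFn_le hq ((hCf x).trans (le_max_left _ _))
      ((hCg x).trans (le_max_right _ _))⟩,
    (hfb.union hgb).subset support_splitFn_subset⟩

end SplitFn

variable {X : Type*} [MeasurableSpace X] [MetricSpace X] {q : ℝ} {f g : X → ℝ} {A : Set X}
  {μ : Measure X} {T : Measure (Measure X)} {ι : Type*} [Fintype ι] {x : ι → X}

lemma IsPointMeasure.exists_restrict_eq_sum_dirac (hμ : IsPointMeasure μ)
    (hA : MeasurableSet A) (hμA : μ A ≠ ∞) :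
    ∃ (ι : Type) (_ : Fintype ι) (x : ι → X),
      (∀ i, x i ∈ A) ∧ μ.restrict A = ∑ i, Measure.dirac (x i) := by
  classical
  obtain ⟨⟨D, rfl⟩, -⟩ := hμ
  set D' : ℕ → Option X := fun n => (D n).filter (fun y => decide (y ∈ A))
  have hrestrict : ∀ n, ((D n).elim 0 Measure.dirac : Measure X).restrict A
      = (D' n).elim 0 Measure.dirac := by
    intro n
    cases hDn : D n with
    | none => simp [D', hDn]
    | some y => by_cases hy : y ∈ A <;> simp [D', hDn, Option.filter_some, restrict_dirac' hA, hy]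
  have hmem : ∀ n y, D' n = some y → y ∈ A := by
    intro n y hy
    cases hDn : D n with
    | none => simp [D', hDn] at hy
    | some z => by_cases hz : z ∈ A <;> simp_all [D', Option.filter_some]
  have hsum : (Measure.sum fun n => (D n).elim 0 Measure.dirac).restrict A
      = Measure.sum fun n => (D' n).elim 0 Measure.dirac := by
    rw [Measure.restrict_sum _ hA]
    simp_rw [hrestrict]
  have hzero : ∀ n, (D' n).isSome = false → ((D' n).elim 0 Measure.dirac : Measure X) = 0 := by
    intro n hn
    cases h : D' n <;> simp_all
  have hfin : {n | (D' n).isSome}.Finite := by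
    rw [← Measure.restrict_apply_univ, hsum, Measure.sum_apply _ MeasurableSet.univ] at hμA
    refine (ENNReal.finite_const_le_of_tsum_ne_top hμA one_ne_zero).subset fun n hn => ?_
    obtain ⟨y, hy⟩ := Option.isSome_iff_exists.1 hn
    simp [hy]
  refine ⟨hfin.toFinset, inferInstance, fun i => (D' i).get (hfin.mem_toFinset.1 i.2),
    fun i => ?_, ?_⟩
  · exact hmem i _ (Option.some_get _).symm
  · ext s hs
    rw [hsum, Measure.sum_apply _ hs, Measure.coe_finsetSum, Finset.sum_apply,
      tsum_eq_sum (s := hfin.toFinset), ← Finset.sum_coe_sort]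
    · refine Finset.sum_congr rfl fun i _ => ?_
      rw [← Option.some_get (hfin.mem_toFinset.1 i.2)]
      rfl
    · intro n hn
      rw [hzero n (by simpa using hn)]
      rfl

lemma memU_indicator {h : X → ℝ} (hh : Measurable h) (hA : MeasurableSet A)
    (hAb : Bornology.IsBounded A) (h0 : ∀ x ∈ A, 0 ≤ h x) {C : ℝ} (hC : ∀ x ∈ A, h x ≤ C) :
    MemU (A.indicator h) := by
  refine ⟨hh.indicator hA, fun x => ?_, ⟨max C 0, fun x => ?_⟩,
    hAb.subset support_indicator_subset⟩
  · by_cases hx : x ∈ A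
    · simpa [hx] using h0 x hx
    · simp [hx]
  · by_cases hx : x ∈ A
    · simpa [hx] using Or.inl (hC x hx)
    · simp [hx]

lemma MemU.indicator (hf : MemU f) (hA : MeasurableSet A) (hAb : Bornology.IsBounded A) :
    MemU (A.indicator f) :=
  let ⟨_, hC⟩ := hf.2.2.1
  memU_indicator hf.1 hA hAb (fun x _ => hf.2.1 x) (fun x _ => hC x)

lemma IsPoissonPP.expNeg_le_measure_ne_top {ϱ : Measure X} {P : Measure (Measure X)}
    (hP : IsPoissonPP ϱ P) (hA : MeasurableSet A) (hAb : Bornology.IsBounded A) {t : ℝ}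
    (ht : 0 < t) : expNeg (ENNReal.ofReal t * ϱ A) ≤ P {μ | μ A ≠ ∞} := by
  have hpair : ∀ m, pairing (A.indicator fun _ => t) m = ENNReal.ofReal t * m A := fun m => by
    rw [pairing_indicator hA, setLIntegral_const]
  have hu : MemU (A.indicator fun _ => t) :=
    memU_indicator measurable_const hA hAb (fun _ _ => ht.le) (fun _ _ => le_rfl)
  calc expNeg (ENNReal.ofReal t * ϱ A)
      ≤ expNeg (∫⁻ x, ENNReal.ofReal (1 - Real.exp (-(A.indicator (fun _ => t) x))) ∂ϱ) := by
        refine expNeg_antitone ((lintegral_mono fun x => ?_).trans_eq (hpair ϱ))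
        exact ENNReal.ofReal_le_ofReal
          (by linarith [Real.one_sub_le_exp_neg (A.indicator (fun _ => t) x)])
    _ = ∫⁻ μ, expNeg (ENNReal.ofReal t * μ A) ∂P := by
        rw [← hP.2.2 _ hu, laplaceT]
        simp_rw [hpair]
    _ ≤ ∫⁻ μ, {μ : Measure X | μ A ≠ ∞}.indicator 1 μ ∂P := by
        refine lintegral_mono fun μ => ?_
        by_cases hμ : μ A = ∞
        · simp [hμ, ENNReal.mul_top (ENNReal.ofReal_pos.2 ht).ne', expNeg]
        · simpa [hμ] using expNeg_le_one _
    _ = P {μ | μ A ≠ ∞} :=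
        lintegral_indicator_one (Measure.measurable_coe hA (measurableSet_singleton ∞)).compl

lemma IsPoissonPP.ae_measure_ne_top {ϱ : Measure X} {P : Measure (Measure X)}
    (hP : IsPoissonPP ϱ P) (hA : MeasurableSet A) (hAb : Bornology.IsBounded A)
    (hϱA : ϱ A ≠ ∞) : ∀ᵐ μ ∂P, μ A ≠ ∞ := by
  have := hP.1
  have hE : MeasurableSet {μ : Measure X | μ A ≠ ∞} :=
    (Measure.measurable_coe hA (measurableSet_singleton ∞)).compl
  rw [ae_iff_measure_eq hE.nullMeasurableSet, measure_univ]
  refine le_antisymm prob_le_one ?_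
  have hlim : Tendsto (fun t : ℝ => ENNReal.ofReal t * ϱ A) (𝓝[>] 0) (𝓝 0) := by
    have h : Tendsto ENNReal.ofReal (𝓝[>] (0 : ℝ)) (𝓝 0) :=
      (ENNReal.continuous_ofReal.tendsto' 0 0 (by simp)).mono_left nhdsWithin_le_nhds
    simpa using ENNReal.Tendsto.mul_const h (Or.inr hϱA)
  rw [← expNeg_zero]
  exact le_of_tendsto ((continuous_expNeg.tendsto 0).comp hlim)
    (eventually_nhdsWithin_of_forall fun t ht => hP.expNeg_le_measure_ne_top hA hAb ht)

lemma IsThinning.laplaceT_eq_prod (hT : IsThinning q μ T) (hq : q ∈ Set.Icc (0 : ℝ) 1)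
    {w : X → ℝ} (hw : MemU w) (hwA : support w ⊆ A)
    (hμA : μ.restrict A = ∑ i, Measure.dirac (x i)) :
    laplaceT T w = ∏ i, ENNReal.ofReal (1 - q + q * Real.exp (-w (x i))) := by
  have hsupp : support (splitFn q w 0) ⊆ A :=
    support_splitFn_subset.trans (by simpa using hwA)
  have h := hT.2.2 w hw
  simp only [← splitFn_zero_right] at h
  rw [h, show (∫⁻ x, ENNReal.ofReal (splitFn q w 0 x) ∂μ) = pairing (splitFn q w 0) μ from rfl,
    expNeg_pairing_eq_prod_of_restrict_eq_sum_dirac (measurable_splitFn hw.1 measurable_zero)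
      (splitFn_nonneg hq hw.2.1 le_rfl) hsupp hμA]
  simp [exp_neg_splitFn hq]

lemma IsThinning.ae_le_and_measure_eq_natCast (hT : IsThinning q μ T) (hA : MeasurableSet A)
    (hμA : μ.restrict A = ∑ i, Measure.dirac (x i)) :
    ∀ᵐ ν ∂T, ν ≤ μ ∧ ν A = ⌊(ν A).toReal⌋₊ ∧ ⌊(ν A).toReal⌋₊ ≤ Fintype.card ι := by
  filter_upwards [hT.2.1] with ν ⟨hν, hνμ⟩
  have hμA' := measure_eq_card_of_restrict_eq_sum_dirac hμA
  have hνA : ν A ≤ Fintype.card ι := hμA' ▸ hνμ A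
  obtain ⟨κ, _, y, -, hνy⟩ :=
    hν.exists_restrict_eq_sum_dirac hA (ne_top_of_le_ne_top (by simp) hνA)
  rw [measure_eq_card_of_restrict_eq_sum_dirac hνy] at hνA ⊢
  exact ⟨hνμ, by simpa using hνA⟩

lemma expNeg_pairing_tilt_mul (hA : MeasurableSet A) (hf : MemU f) (hg : MemU g)
    (hfA : support f ⊆ A) (hgA : support g ⊆ A) {s : ℝ} (hs : 0 ≤ s) (hgs : ∀ x, g x ≤ s)
    {ν : Measure X} (hνμ : ν ≤ μ) {n : ℕ} (hνA : ν A = n) :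
    expNeg (pairing (A.indicator fun x => f x - g x + s) ν) * expNeg (pairing g μ)
      = ENNReal.ofReal (Real.exp (-s) ^ n)
        * (expNeg (pairing f ν) * expNeg (pairing g μ - pairing g ν)) := by
  have hpt : ∀ x, ENNReal.ofReal (A.indicator (fun x => f x - g x + s) x) + ENNReal.ofReal (g x)
      = ENNReal.ofReal (f x) + A.indicator (fun _ => ENNReal.ofReal s) x := by
    intro x
    by_cases hx : x ∈ A
    · simp only [indicator_of_mem hx]
      rw [← ENNReal.ofReal_add (by linarith [hf.2.1 x, hgs x]) (hg.2.1 x),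
        ← ENNReal.ofReal_add (hf.2.1 x) hs]
      ring_nf
    · have hfx : f x = 0 := notMem_support.1 fun h => hx (hfA h)
      have hgx : g x = 0 := notMem_support.1 fun h => hx (hgA h)
      simp [hx, hfx, hgx]
  have hlin : pairing (A.indicator fun x => f x - g x + s) ν + pairing g ν
      = pairing f ν + ENNReal.ofReal s * n := by
    have hwm : Measurable (A.indicator fun x => f x - g x + s) :=
      ((hf.1.sub hg.1).add_const s).indicator hA
    rw [pairing, pairing, ← lintegral_add_left hwm.ennreal_ofReal, lintegral_congr hpt,
      lintegral_add_left hf.1.ennreal_ofReal, lintegral_indicator_const hA, hνA]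
    rfl
  calc _ = expNeg (pairing (A.indicator fun x => f x - g x + s) ν + pairing g ν
        + (pairing g μ - pairing g ν)) := by
        rw [← expNeg_add, add_assoc, add_tsub_cancel_of_le (pairing_mono hνμ)]
    _ = _ := by rw [hlin, expNeg_add, expNeg_add, expNeg_mul_natCast hs]; ring

lemma IsThinning.lintegral_pow_mul_eq_prod (hT : IsThinning q μ T) (hq : q ∈ Set.Icc (0 : ℝ) 1)
    (hf : MemU f) (hg : MemU g) (hA : MeasurableSet A) (hAb : Bornology.IsBounded A)
    (hfA : support f ⊆ A) (hgA : support g ⊆ A) (hx : ∀ i, x i ∈ A)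
    (hμA : μ.restrict A = ∑ i, Measure.dirac (x i)) {M : ℝ} (hM : 0 ≤ M)
    (hfM : ∀ x, f x ≤ M) (hgM : ∀ x, g x ≤ M) {z : ℝ} (hz : z ∈ Set.Ioc 0 (Real.exp (-M))) :
    ∫⁻ ν, ENNReal.ofReal (z ^ ⌊(ν A).toReal⌋₊)
        * (expNeg (pairing f ν) * expNeg (pairing g μ - pairing g ν)) ∂T
      = ∏ i, ENNReal.ofReal ((1 - q) * Real.exp (-g (x i)) + q * Real.exp (-f (x i)) * z) := by
  obtain ⟨s, hMs, rfl⟩ : ∃ s, M ≤ s ∧ Real.exp (-s) = z := ⟨-Real.log z, by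
    rw [le_neg, ← Real.log_exp (-M)]
    exact Real.log_le_log hz.1 hz.2, by simp [Real.exp_log hz.1]⟩
  have hw : MemU (A.indicator fun x => f x - g x + s) :=
    memU_indicator (((hf.1.sub hg.1).add_const s)) hA hAb
      (fun x _ => by linarith [hf.2.1 x, hgM x]) (C := M + s)
      (fun x _ => by linarith [hfM x, hg.2.1 x])
  calc _ = ∫⁻ ν, expNeg (pairing (A.indicator fun x => f x - g x + s) ν)
        * expNeg (pairing g μ) ∂T := by
        refine lintegral_congr_ae ?_
        filter_upwards [hT.ae_le_and_measure_eq_natCast hA hμA] with ν ⟨hνμ, hνA, _⟩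
        rw [expNeg_pairing_tilt_mul hA hf hg hfA hgA (hM.trans hMs) (fun x => (hgM x).trans hMs)
          hνμ hνA]
    _ = laplaceT T (A.indicator fun x => f x - g x + s) * expNeg (pairing g μ) :=
        lintegral_mul_const _ (measurable_expNeg.comp (measurable_pairing hw.1))
    _ = _ := by
        rw [hT.laplaceT_eq_prod hq hw support_indicator_subset hμA,
          expNeg_pairing_eq_prod_of_restrict_eq_sum_dirac hg.1 hg.2.1 hgA hμA,
          ← Finset.prod_mul_distrib]
        refine Finset.prod_congr rfl fun i _ => ?_
        rw [← ENNReal.ofReal_mul (add_nonneg (sub_nonneg.2 hq.2)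
          (mul_nonneg hq.1 (Real.exp_pos _).le)), indicator_of_mem (hx i)]
        congr 1
        rw [show -(f (x i) - g (x i) + s) = -f (x i) + -s + g (x i) by ring, Real.exp_add,
          Real.exp_add, Real.exp_neg (g (x i))]
        field_simp

lemma IsThinning.exists_lintegral_pow_mul_eq_eval (hT : IsThinning q μ T)
    (hq : q ∈ Set.Icc (0 : ℝ) 1) (hf : MemU f) (hg : MemU g) (hA : MeasurableSet A)
    (hAb : Bornology.IsBounded A) (hfA : support f ⊆ A) (hgA : support g ⊆ A) (hx : ∀ i, x i ∈ A)
    (hμA : μ.restrict A = ∑ i, Measure.dirac (x i)) :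
    ∃ z₀ > 0, ∀ z ∈ Set.Ioc 0 z₀,
      (∫⁻ ν, ENNReal.ofReal (z ^ ⌊(ν A).toReal⌋₊)
        * (expNeg (pairing f ν) * expNeg (pairing g μ - pairing g ν)) ∂T).toReal
      = (∏ i, (Polynomial.C ((1 - q) * Real.exp (-g (x i)))
          + Polynomial.C (q * Real.exp (-f (x i))) * Polynomial.X)).eval z := by
  obtain ⟨Mf, hMf⟩ := hf.2.2.1
  obtain ⟨Mg, hMg⟩ := hg.2.2.1
  refine ⟨Real.exp (-max (max Mf Mg) 0), Real.exp_pos _, fun z hz => ?_⟩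
  have hnonneg : ∀ i ∈ Finset.univ,
      0 ≤ (1 - q) * Real.exp (-g (x i)) + q * Real.exp (-f (x i)) * z := fun i _ =>
    add_nonneg (mul_nonneg (sub_nonneg.2 hq.2) (Real.exp_pos _).le)
      (mul_nonneg (mul_nonneg hq.1 (Real.exp_pos _).le) hz.1.le)
  rw [hT.lintegral_pow_mul_eq_prod hq hf hg hA hAb hfA hgA hx hμA (le_max_right _ _)
      (fun x => (hMf x).trans (by simp)) (fun x => (hMg x).trans (by simp)) hz,
    ← ENNReal.ofReal_prod_of_nonneg hnonneg, ENNReal.toReal_ofReal (Finset.prod_nonneg hnonneg),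
    Polynomial.eval_prod]
  simp

lemma IsThinning.lintegral_splitting_eq (hT : IsThinning q μ T) (hq : q ∈ Set.Icc (0 : ℝ) 1)
    (hf : MemU f) (hg : MemU g) (hA : MeasurableSet A) (hAb : Bornology.IsBounded A)
    (hfA : support f ⊆ A) (hgA : support g ⊆ A) (hx : ∀ i, x i ∈ A)
    (hμA : μ.restrict A = ∑ i, Measure.dirac (x i)) :
    ∫⁻ ν, expNeg (pairing f ν) * expNeg (pairing g (μ - ν)) ∂T
      = expNeg (pairing (splitFn q f g) μ) := by
  have := hT.1
  have hgood := hT.ae_le_and_measure_eq_natCast hA hμA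
  have hgμ : pairing g μ ≠ ∞ := by
    rw [pairing_eq_sum_of_restrict_eq_sum_dirac hg.1 hgA hμA]
    exact ENNReal.sum_ne_top.2 fun _ _ => ENNReal.ofReal_ne_top
  set Ψ : Measure X → ℝ≥0∞ := fun ν => expNeg (pairing f ν) * expNeg (pairing g μ - pairing g ν)
  have hΨ : (fun ν => expNeg (pairing f ν) * expNeg (pairing g (μ - ν))) =ᵐ[T] Ψ := by
    filter_upwards [hgood] with ν ⟨hνμ, hνA, _⟩
    rw [pairing_sub_of_le hA hgA hνμ (hνA ▸ ENNReal.natCast_ne_top _)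
      (ne_top_of_le_ne_top hgμ (pairing_mono hνμ))]
  have hΨm : Measurable Ψ := (measurable_expNeg.comp (measurable_pairing hf.1)).mul
    (measurable_expNeg.comp (measurable_const.sub (measurable_pairing hg.1)))
  have hΨfin : ∫⁻ ν, Ψ ν ∂T ≠ ∞ := ne_top_of_le_ne_top (by simp)
    (lintegral_mono fun ν => mul_le_one' (expNeg_le_one _) (expNeg_le_one _))
  have hN : Measurable fun ν : Measure X => ⌊(ν A).toReal⌋₊ :=
    (ENNReal.measurable_toReal.comp (Measure.measurable_coe hA)).nat_floor
  obtain ⟨z₀, hz₀, hmoment⟩ := hT.exists_lintegral_pow_mul_eq_eval hq hf hg hA hAb hfA hgA hx hμA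
  rw [lintegral_congr_ae hΨ, ← ENNReal.toReal_eq_toReal_iff' hΨfin (expNeg_ne_top _),
    lintegral_toReal_eq_eval_one hN (hgood.mono fun _ h => h.2.2) hΨm hΨfin hz₀ hmoment,
    expNeg_pairing_eq_prod_of_restrict_eq_sum_dirac (measurable_splitFn hf.1 hg.1)
      (splitFn_nonneg hq hf.2.1 hg.2.1) (support_splitFn_subset.trans (union_subset hfA hgA)) hμA,
    ← ENNReal.ofReal_prod_of_nonneg fun i _ => (Real.exp_pos _).le,
    ENNReal.toReal_ofReal (Finset.prod_nonneg fun i _ => (Real.exp_pos _).le),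
    Polynomial.eval_prod]
  simp [exp_neg_splitFn hq]

lemma lintegral_splitting_eq_laplaceT_of_isBounded {ϱ : Measure X} {P : Measure (Measure X)}
    (hP : IsPoissonPP ϱ P) {T : Measure X → Measure (Measure X)}
    (hT : ∀ μ, IsPointMeasure μ → IsThinning q μ (T μ)) {S : Measure (Measure X × Measure X)}
    (hS : ∀ h : Measure X × Measure X → ℝ≥0∞, Measurable h →
      ∫⁻ p, h p ∂S = ∫⁻ μ, ∫⁻ ν, h (ν, μ - ν) ∂(T μ) ∂P)
    (hq : q ∈ Set.Icc (0 : ℝ) 1) (hf : MemU f) (hg : MemU g) (hA : MeasurableSet A)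
    (hAb : Bornology.IsBounded A) (hϱA : ϱ A ≠ ∞) (hfA : support f ⊆ A) (hgA : support g ⊆ A) :
    ∫⁻ p, expNeg (pairing f p.1) * expNeg (pairing g p.2) ∂S = laplaceT P (splitFn q f g) := by
  rw [hS _ (measurable_expNeg_pairing_mul hf.1 hg.1), laplaceT]
  refine lintegral_congr_ae ?_
  filter_upwards [hP.2.1, hP.ae_measure_ne_top hA hAb hϱA] with μ hμ hμA
  obtain ⟨ι, _, x, hx, hμx⟩ := hμ.exists_restrict_eq_sum_dirac hA hμA
  exact (hT μ hμ).lintegral_splitting_eq hq hf hg hA hAb hfA hgA hx hμx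

end PoissonSplitting

theorem statement16_general {X : Type*} [MeasurableSpace X] [MetricSpace X] [PolishSpace X]
    (ϱ : Measure X) (hϱ : IsLocallyFiniteMeasure ϱ)
    (q : ℝ) (hq : q ∈ Set.Ioo (0 : ℝ) 1)
    (f g : X → ℝ) (hf : MemU f) (hg : MemU g)
    (Pϱ : Measure (Measure X)) (hPϱ : IsPoissonPP ϱ Pϱ)
    (T : Measure X → Measure (Measure X))
    (hT : ∀ μ, IsPointMeasure μ → IsThinning q μ (T μ))
    (S : Measure (Measure X × Measure X))
    (hS : ∀ h : Measure X × Measure X → ℝ≥0∞, Measurable h →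
      ∫⁻ p, h p ∂S = ∫⁻ μ, ∫⁻ ν, h (ν, μ - ν) ∂(T μ) ∂Pϱ)
    (v : X → ℝ)
    (hv : ∀ x, v x = -Real.log ((1 - q) * Real.exp (-g x) + q * Real.exp (-f x))) :
    (∀ x, v x = g x - Real.log (1 - q + q * Real.exp (g x - f x)))
      ∧ MemU v
      ∧ ∫⁻ p, expNeg (pairing f p.1) * expNeg (pairing g p.2) ∂S = laplaceT Pϱ v := by
  have hq' : q ∈ Set.Icc (0 : ℝ) 1 := Set.Ioo_subset_Icc_self hq
  obtain rfl : v = splitFn q f g := funext hv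
  refine ⟨splitFn_eq_sub_log hq', memU_splitFn hq' hf hg, ?_⟩
  have := hPϱ.1
  have := isProbabilityMeasure_of_lintegral_eq_lintegral_lintegral_sub
    (hPϱ.2.1.mono fun μ hμ => (hT μ hμ).1) hS
  -- `spanningSets ϱ` exists since a locally finite measure on a Polish space is σ-finite.
  set A : ℕ → Set X := fun n => spanningSets ϱ n ∩ (support f ∪ support g)
  have hAm : ∀ n, MeasurableSet (A n) := fun n => (measurableSet_spanningSets ϱ n).inter
    ((measurableSet_support hf.1).union (measurableSet_support hg.1))
  have hAb : ∀ n, Bornology.IsBounded (A n) := fun n =>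
    (hf.2.2.2.union hg.2.2.2).subset inter_subset_right
  have hAmono : Monotone A := fun m n hmn =>
    inter_subset_inter_left _ (monotone_spanningSets ϱ hmn)
  have hcover : support f ∪ support g ⊆ ⋃ n, A n := by
    rw [← iUnion_inter, iUnion_spanningSets, univ_inter]
  refine tendsto_nhds_unique (tendsto_lintegral_expNeg_pairing_mul_indicator hf.1 hg.1 hAm hAmono
    (subset_union_left.trans hcover) (subset_union_right.trans hcover))
    ((tendsto_laplaceT_indicator (measurable_splitFn hf.1 hg.1) hAm hAmono
      (support_splitFn_subset.trans hcover)).congr fun n => ?_)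
  rw [← splitFn_indicator]
  exact (lintegral_splitting_eq_laplaceT_of_isBounded hPϱ hT hS hq'
    (hf.indicator (hAm n) (hAb n)) (hg.indicator (hAm n) (hAb n)) (hAm n) (hAb n)
    ((measure_mono inter_subset_left).trans_lt (measure_spanningSets_lt_top ϱ n)).ne
    support_indicator_subset support_indicator_subset).symm

/-- The splitting law of the Poisson point process `Π_ϱ`, evaluated on the exponential
test function `e^{-ζ_f} ⊗ e^{-ζ_g}`, equals the single Laplace transform `L_{Π_ϱ}(v)`,
where `v = g - log(1-q+q e^{g-f}) = -log((1-q) e^{-g} + q e^{-f}) ∈ U`. -/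
theorem statement16 {X : Type*} [MeasurableSpace X] [MetricSpace X] [PolishSpace X]
    [BorelSpace X] (ϱ : Measure X) (hϱ : IsLocallyFiniteMeasure ϱ)
    (q : ℝ) (hq : q ∈ Set.Ioo (0 : ℝ) 1)
    (f g : X → ℝ) (hf : MemU f) (hg : MemU g)
    (Pϱ : Measure (Measure X)) (hPϱ : IsPoissonPP ϱ Pϱ)
    (T : Measure X → Measure (Measure X)) (hTm : Measurable T)
    (hT : ∀ μ, IsPointMeasure μ → IsThinning q μ (T μ))
    (S : Measure (Measure X × Measure X))
    (hS : ∀ h : Measure X × Measure X → ℝ≥0∞, Measurable h →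
      ∫⁻ p, h p ∂S = ∫⁻ μ, ∫⁻ ν, h (ν, μ - ν) ∂(T μ) ∂Pϱ)
    (v : X → ℝ)
    (hv : ∀ x, v x = -Real.log ((1 - q) * Real.exp (-g x) + q * Real.exp (-f x))) :
    (∀ x, v x = g x - Real.log (1 - q + q * Real.exp (g x - f x)))
      ∧ MemU v
      ∧ ∫⁻ p, expNeg (pairing f p.1) * expNeg (pairing g p.2) ∂S = laplaceT Pϱ v :=
  statement16_general ϱ hϱ q hq f g hf hg Pϱ hPϱ T hT S hS v hv
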